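/- Let δ = 2^{−log 2}. Suppose π is a probability measure on the all-positive states {(m,n) ∈ ℤ² : m ≥ 1, n ≥ 1} and λ ∈ (0,1) satisfies Σ_{(i,j)} π(i,j)·Q((i,j),(m,n)) = λ·π(m,n) for all m, n ≥ 1, where Q is the transition matrix of the stochastic Ricker competition chain restricted to the all-positive states. Then λ ≤ 1 − δ^{1/K + 1/K̃}. -/

import Mathlib

open Filter

/-- The modified offspring distribution: given inhibition exponent c, the litter size has
P(ξ = k) = e^{−c}·q(k) for k ≥ 1 and P(ξ = 0) = 1 − e^{−c}·(1 − q(0)). -/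
noncomputable def modPMF (c : ℝ) (q : ℕ → ℝ) : ℕ → ℝ :=
  fun k => if k = 0 then 1 - Real.exp (-c) * (1 - q 0) else Real.exp (-c) * q k

/-- `convPow f m` is the m-fold convolution power of the pmf `f` on ℕ: the distribution of
the sum of m i.i.d. random variables with pmf `f` (the point mass at 0 when m = 0). -/
noncomputable def convPow (f : ℕ → ℝ) : ℕ → ℕ → ℝ
  | 0, k => if k = 0 then 1 else 0
  | m + 1, k => ∑ i ∈ Finset.range (k + 1), f i * convPow f m (k - i)

/-- The transition probabilities of the stochastic Ricker competition chain (U_t, V_t) on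
ℤ_{≥0}²: from (m,n), U_{t+1} is a sum of m i.i.d. litters with pmf `modPMF (K(m+bn)) q` and,
independently, V_{t+1} is a sum of n i.i.d. litters with pmf `modPMF (K̃(am+n)) q̃`
(a coordinate equal to 0 stays 0). -/
noncomputable def rickerKernel (a b K K' : ℝ) (q q' : ℕ → ℝ) :
    ℕ × ℕ → ℕ × ℕ → ℝ :=
  fun p p' =>
    convPow (modPMF (K * ((p.1 : ℝ) + b * (p.2 : ℝ))) q) p.1 p'.1 *
    convPow (modPMF (K' * (a * (p.1 : ℝ) + (p.2 : ℝ))) q') p.2 p'.2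

/-- t-step transition probabilities of a Markov kernel on ℤ_{≥0}². -/
noncomputable def kernelPow (P : ℕ × ℕ → ℕ × ℕ → ℝ) : ℕ → ℕ × ℕ → ℕ × ℕ → ℝ
  | 0, p, p' => if p = p' then 1 else 0
  | t + 1, p, p' => ∑' s : ℕ × ℕ, P p s * kernelPow P t s p'

/-- `IsQSD P π lam` : π is a quasi-stationary distribution of the chain with transition
probabilities `P`, with eigenvalue `lam`: π is a probability distribution supported on
the all-positive states {(m,n) : m ≥ 1, n ≥ 1}, and π·Q = lam·π where Q is the
restriction of P to the all-positive states. -/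
def IsQSD (P : ℕ × ℕ → ℕ × ℕ → ℝ) (π : ℕ × ℕ → ℝ) (lam : ℝ) : Prop :=
  (∀ p, 0 ≤ π p) ∧
  (∀ p : ℕ × ℕ, p.1 = 0 ∨ p.2 = 0 → π p = 0) ∧
  HasSum π 1 ∧
  (∀ p : ℕ × ℕ, 1 ≤ p.1 → 1 ≤ p.2 →
    HasSum (fun s : ℕ × ℕ => π s * P s p) (lam * π p))

/-- δ = 2^{-log 2}, the minimum over x > 0 of (1 - e^{-x})^x. -/
noncomputable def rickerDelta : ℝ := (2 : ℝ) ^ (-Real.log 2)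

/-! From every all-positive state `(m, n)` the chain jumps to the absorbing state `(0, 0)` with
probability at least `δ ^ (1 / K + 1 / K')`: all `m` litters of the first species are empty with
probability at least `(1 - e^{-Km})^m`, and `(1 - e^{-x})^x ≥ δ` for `x > 0` because
`log u * log (1 - u) ≤ (log 2)^2` on `(0, 1)`. Hence one step of the chain started from the
quasi-stationary distribution `π` loses at least that fraction of its mass to `(0, 0)`, while by
`π Q = λ π` the mass it keeps is exactly `λ`. -/
section

open Real

lemma mul_log_le_one_sub_mul_log_one_sub {t : ℝ} (ht0 : 0 < t) (ht : t ≤ 1 / 2) :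
    t * log t ≤ (1 - t) * log (1 - t) := by
  rcases le_total t (exp (-1)) with hsmall | hlarge
  · have hlog : log t ≤ -1 := by simpa using log_le_log ht0 hsmall
    have h1t : 0 < 1 - t := by linarith
    calc t * log t ≤ t * (-1) := mul_le_mul_of_nonneg_left hlog ht0.le
      _ = (1 - t) * (1 - (1 - t)⁻¹) := by field_simp; ring
      _ ≤ (1 - t) * log (1 - t) :=
        mul_le_mul_of_nonneg_left (one_sub_inv_le_log_of_pos h1t) h1t.le
  · -- on `[e⁻¹, 1/2]` the difference has derivative `-log (x (1 - x)) - 2 ≤ 0` and vanishes at `1/2`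
    set f : ℝ → ℝ := fun x => (1 - x) * log (1 - x) - x * log x
    have hf : AntitoneOn f (Set.Icc (exp (-1)) (1 / 2)) := by
      refine antitoneOn_of_hasDerivWithinAt_nonpos (convex_Icc _ _)
        (f' := fun x => -log (1 - x) - 1 - (log x + 1)) ?_ ?_ ?_
      · exact ((continuous_mul_log.comp (continuous_const.sub continuous_id)).sub
          continuous_mul_log).continuousOn
      · intro x hx
        rw [interior_Icc] at hx
        have hx0 : x ≠ 0 := (lt_trans (exp_pos _) hx.1).ne'
        have hx1 : 1 - x ≠ 0 := by linarith [hx.2]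
        have h := ((hasDerivAt_mul_log hx1).comp x ((hasDerivAt_id x).const_sub 1)).sub
          (hasDerivAt_mul_log hx0)
        exact (h.congr_deriv (by ring)).hasDerivWithinAt
      · intro x hx
        rw [interior_Icc] at hx
        have hx0 : -1 ≤ log x := by simpa using log_le_log (exp_pos _) hx.1.le
        have hhalf : log (1 / 2) ≤ log (1 - x) := log_le_log (by norm_num) (by linarith [hx.2])
        have hlog2 : log (1 / 2 : ℝ) = -log 2 := by simp
        linarith [log_two_lt_d9]
    have h := hf ⟨hlarge, ht⟩ ⟨hlarge.trans ht, le_rfl⟩ ht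
    norm_num [f] at h
    linarith

lemma log_mul_log_one_sub_le_of_le_half {u : ℝ} (hu0 : 0 < u) (hu : u ≤ 1 / 2) :
    log u * log (1 - u) ≤ log 2 ^ 2 := by
  have hmono : MonotoneOn (fun x => log x * log (1 - x)) (Set.Ioc 0 (1 / 2)) := by
    refine monotoneOn_of_hasDerivWithinAt_nonneg (convex_Ioc _ _)
      (f' := fun x => ((1 - x) * log (1 - x) - x * log x) / (x * (1 - x))) ?_ ?_ ?_
    · refine ContinuousOn.mul (continuousOn_log.mono ?_) ((continuousOn_log.comp
        (continuous_const.sub continuous_id).continuousOn) ?_)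
      · exact fun x hx => hx.1.ne'
      · intro x hx
        simp only [Set.mem_compl_singleton_iff, Pi.sub_apply, id]
        linarith [hx.2]
    · intro x hx
      rw [interior_Ioc] at hx
      have hx1 : 1 - x ≠ 0 := by linarith [hx.2]
      have h := (hasDerivAt_log hx.1.ne').mul
        ((hasDerivAt_log hx1).comp x ((hasDerivAt_id x).const_sub 1))
      refine (h.congr_deriv ?_).hasDerivWithinAt
      simp only [Function.comp]
      field_simp [hx.1.ne']
      ring
    · intro x hx
      rw [interior_Ioc] at hx
      have hx1 : 0 < 1 - x := by linarith [hx.2]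
      exact div_nonneg (sub_nonneg.2 (mul_log_le_one_sub_mul_log_one_sub hx.1 hx.2.le))
        (mul_pos hx.1 hx1).le
  have h := hmono ⟨hu0, hu⟩ ⟨by norm_num, le_rfl⟩ hu
  simp only at h
  rwa [show (1 : ℝ) - 1 / 2 = 2⁻¹ by norm_num, one_div, log_inv, neg_mul_neg, ← sq] at h

lemma log_mul_log_one_sub_le {u : ℝ} (hu0 : 0 < u) (hu1 : u < 1) :
    log u * log (1 - u) ≤ log 2 ^ 2 := by
  rcases le_total u (1 / 2) with h | h
  · exact log_mul_log_one_sub_le_of_le_half hu0 h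
  · have := log_mul_log_one_sub_le_of_le_half (u := 1 - u) (by linarith) (by linarith)
    rw [sub_sub_cancel] at this
    linarith [mul_comm (log u) (log (1 - u))]

lemma rickerDelta_pos : 0 < rickerDelta := rpow_pos_of_pos two_pos _

lemma rickerDelta_le_one_sub_exp_neg_rpow {x : ℝ} (hx : 0 < x) :
    rickerDelta ≤ (1 - exp (-x)) ^ x := by
  have hu1 : exp (-x) < 1 := exp_lt_one_iff.2 (by linarith)
  rw [rickerDelta, rpow_def_of_pos two_pos, rpow_def_of_pos (by linarith), exp_le_exp]
  have h := log_mul_log_one_sub_le (exp_pos (-x)) hu1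
  rw [log_exp] at h
  nlinarith

lemma rickerDelta_rpow_inv_le {K c : ℝ} (hK : 0 < K) {m : ℕ} (hm : 1 ≤ m) (hc : K * m ≤ c) :
    rickerDelta ^ (1 / K) ≤ (1 - exp (-c)) ^ m := by
  have hx : 0 < K * m := mul_pos hK (by exact_mod_cast hm)
  have hbase : 0 ≤ 1 - exp (-(K * m)) := by linarith [exp_lt_one_iff.2 (neg_lt_zero.2 hx)]
  calc rickerDelta ^ (1 / K) ≤ ((1 - exp (-(K * m))) ^ (K * m : ℝ)) ^ (1 / K) :=
        rpow_le_rpow rickerDelta_pos.le (rickerDelta_le_one_sub_exp_neg_rpow hx) (by positivity)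
    _ = (1 - exp (-(K * m))) ^ m := by
        rw [← rpow_mul hbase, mul_one_div, mul_div_cancel_left₀ _ hK.ne', rpow_natCast]
    _ ≤ (1 - exp (-c)) ^ m := pow_le_pow_left₀ hbase (by gcongr) _

section Pmf

variable {c : ℝ} {q : ℕ → ℝ}

lemma modPMF_nonneg (hc : 0 ≤ c) (hq : ∀ k, 0 ≤ q k) (hq0 : q 0 ≤ 1) (k : ℕ) :
    0 ≤ modPMF c q k := by
  have hexp : exp (-c) ≤ 1 := exp_le_one_iff.2 (by linarith)
  rcases k with _ | k
  · rw [modPMF, if_pos rfl]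
    nlinarith [exp_pos (-c), hq 0]
  · exact mul_nonneg (exp_pos _).le (hq _)

lemma modPMF_hasSum (hq1 : HasSum q 1) : HasSum (modPMF c q) 1 := by
  have h := (hq1.mul_left (exp (-c))).add (hasSum_ite_eq 0 (1 - exp (-c)))
  rw [mul_one, add_sub_cancel] at h
  refine (funext fun k => ?_ : _ = modPMF c q) ▸ h
  rcases k with _ | k <;> simp [modPMF]
  ring

lemma one_sub_exp_neg_le_modPMF_zero (hq0 : 0 ≤ q 0) : 1 - exp (-c) ≤ modPMF c q 0 := by
  rw [modPMF, if_pos rfl]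
  nlinarith [exp_pos (-c)]

variable {f : ℕ → ℝ}

lemma convPow_nonneg (hf : ∀ k, 0 ≤ f k) (m k : ℕ) : 0 ≤ convPow f m k := by
  induction m generalizing k with
  | zero => unfold convPow; split <;> norm_num
  | succ m ih => exact Finset.sum_nonneg fun i _ => mul_nonneg (hf i) (ih _)

lemma convPow_hasSum (hf1 : HasSum f 1) (m : ℕ) : HasSum (convPow f m) 1 := by
  induction m with
  | zero => exact hasSum_ite_eq 0 1
  | succ m ih =>
    have h := hasSum_sum_range_mul_of_summable_norm hf1.summable.norm ih.summable.norm
    rwa [hf1.tsum_eq, ih.tsum_eq, one_mul] at h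

lemma convPow_apply_zero (m : ℕ) : convPow f m 0 = f 0 ^ m := by
  induction m with
  | zero => simp [convPow]
  | succ m ih => simp [convPow, ih, pow_succ, mul_comm]

end Pmf

section RickerKernel

variable {a b K K' : ℝ} {q q' : ℕ → ℝ}

lemma rickerKernel_nonneg (ha : 0 ≤ a) (hb : 0 ≤ b) (hK : 0 ≤ K) (hK' : 0 ≤ K')
    (hq : ∀ k, 0 ≤ q k) (hq0 : q 0 ≤ 1) (hq' : ∀ k, 0 ≤ q' k) (hq0' : q' 0 ≤ 1)
    (s p : ℕ × ℕ) : 0 ≤ rickerKernel a b K K' q q' s p :=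
  mul_nonneg (convPow_nonneg (modPMF_nonneg (by positivity) hq hq0) _ _)
    (convPow_nonneg (modPMF_nonneg (by positivity) hq' hq0') _ _)

lemma rickerKernel_hasSum (ha : 0 ≤ a) (hb : 0 ≤ b) (hK : 0 ≤ K) (hK' : 0 ≤ K')
    (hq : ∀ k, 0 ≤ q k) (hq1 : HasSum q 1) (hq' : ∀ k, 0 ≤ q' k) (hq1' : HasSum q' 1)
    (s : ℕ × ℕ) : HasSum (rickerKernel a b K K' q q' s) 1 := by
  have hF := convPow_hasSum (modPMF_hasSum (c := K * (s.1 + b * s.2)) hq1) s.1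
  have hG := convPow_hasSum (modPMF_hasSum (c := K' * (a * s.1 + s.2)) hq1') s.2
  have h := hF.mul hG <| hF.summable.mul_of_nonneg hG.summable
    (convPow_nonneg (modPMF_nonneg (by positivity) hq (le_hasSum hq1 0 fun k _ => hq k)) _)
    (convPow_nonneg (modPMF_nonneg (by positivity) hq' (le_hasSum hq1' 0 fun k _ => hq' k)) _)
  rwa [one_mul] at h

lemma rickerDelta_rpow_le_convPow_modPMF_zero {c : ℝ} (hK : 0 < K) {m : ℕ} (hm : 1 ≤ m)
    (hc : K * m ≤ c) (hq0 : 0 ≤ q 0) : rickerDelta ^ (1 / K) ≤ convPow (modPMF c q) m 0 := by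
  have hc0 : 0 ≤ c := (mul_pos hK (by exact_mod_cast hm)).le.trans hc
  rw [convPow_apply_zero]
  refine (rickerDelta_rpow_inv_le hK hm hc).trans (pow_le_pow_left₀ ?_
    (one_sub_exp_neg_le_modPMF_zero hq0) m)
  linarith [exp_le_one_iff.2 (neg_nonpos.2 hc0)]

lemma rickerDelta_rpow_le_rickerKernel_zero (ha : 0 ≤ a) (hb : 0 ≤ b) (hK : 0 < K)
    (hK' : 0 < K') (hq0 : 0 ≤ q 0) (hq0' : 0 ≤ q' 0) {s : ℕ × ℕ} (h1 : 1 ≤ s.1) (h2 : 1 ≤ s.2) :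
    rickerDelta ^ (1 / K + 1 / K') ≤ rickerKernel a b K K' q q' s (0, 0) := by
  have hU := rickerDelta_rpow_le_convPow_modPMF_zero (q := q) (c := K * (s.1 + b * s.2)) hK h1
    (by gcongr; exact le_add_of_nonneg_right (by positivity)) hq0
  have hV := rickerDelta_rpow_le_convPow_modPMF_zero (q := q') (c := K' * (a * s.1 + s.2)) hK' h2
    (by gcongr; exact le_add_of_nonneg_left (by positivity)) hq0'
  rw [rpow_add rickerDelta_pos]
  exact mul_le_mul hU hV (rpow_pos_of_pos rickerDelta_pos _).le
    ((rpow_pos_of_pos rickerDelta_pos _).le.trans hU)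

end RickerKernel

end

theorem eigenvalue_le_one_sub_of_le_kernel {α : Type*} {P : α → α → ℝ} {π : α → ℝ}
    {lam ε : ℝ} {S : Set α} {p₀ : α} (hP : ∀ s p, 0 ≤ P s p) (hP1 : ∀ s, HasSum (P s) 1)
    (hp₀ : p₀ ∉ S) (hε : ∀ s ∈ S, ε ≤ P s p₀) (hπ : ∀ p, 0 ≤ π p) (hπS : ∀ p ∉ S, π p = 0)
    (hπ1 : HasSum π 1) (heig : ∀ p ∈ S, HasSum (fun s => π s * P s p) (lam * π p)) :
    lam ≤ 1 - ε := by
  classical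
  have hlam : HasSum (fun p => lam * π p) lam := by simpa using hπ1.mul_left lam
  refine hasSum_le_of_sum_le hlam fun F => ?_
  set G := F.filter (· ∈ S)
  have hrow : ∀ s ∈ S, ∑ p ∈ G, P s p ≤ 1 - ε := fun s hs => by
    have h := sum_le_hasSum (insert p₀ G) (fun p _ => hP s p) (hP1 s)
    rw [Finset.sum_insert (by simp [G, hp₀])] at h
    linarith [hε s hs]
  have hterm : ∀ s, π s * ∑ p ∈ G, P s p ≤ π s * (1 - ε) := fun s => by
    by_cases hs : s ∈ S
    · exact mul_le_mul_of_nonneg_left (hrow s hs) (hπ s)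
    · simp [hπS s hs]
  have hG : HasSum (fun s => π s * ∑ p ∈ G, P s p) (∑ p ∈ G, lam * π p) := by
    simp_rw [Finset.mul_sum]
    exact hasSum_sum fun p hp => heig p (Finset.mem_filter.1 hp).2
  calc ∑ p ∈ F, lam * π p = ∑ p ∈ G, lam * π p := by
        refine (Finset.sum_filter_of_ne fun p _ h => ?_).symm
        by_contra hp
        simp [hπS p hp] at h
    _ ≤ 1 - ε := by simpa using hasSum_le hterm hG (hπ1.mul_right (1 - ε))

theorem IsQSD.le_one_sub_of_le_kernel_zero {P : ℕ × ℕ → ℕ × ℕ → ℝ} {π : ℕ × ℕ → ℝ} {lam ε : ℝ}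
    (hπ : IsQSD P π lam) (hP : ∀ s p, 0 ≤ P s p) (hP1 : ∀ s, HasSum (P s) 1)
    (hε : ∀ s : ℕ × ℕ, 1 ≤ s.1 → 1 ≤ s.2 → ε ≤ P s (0, 0)) : lam ≤ 1 - ε := by
  obtain ⟨hπ0, hπS, hπ1, heig⟩ := hπ
  refine eigenvalue_le_one_sub_of_le_kernel (S := {p | 1 ≤ p.1 ∧ 1 ≤ p.2}) hP hP1 (by simp)
    (fun s hs => hε s hs.1 hs.2) hπ0 (fun p hp => hπS p ?_) hπ1 (fun p hp => heig p hp.1 hp.2)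
  simp only [Set.mem_ofPred_eq, not_and_or, not_le, Nat.lt_one_iff] at hp
  exact hp

theorem qsd_eigenvalue_le_general
    (a b K K' : ℝ) (ha : 0 < a) (hb : 0 < b) (hK : 0 < K) (hK' : 0 < K')
    (q q' : ℕ → ℝ)
    (hq : ∀ k, 0 ≤ q k) (hq1 : HasSum q 1)
    (hq' : ∀ k, 0 ≤ q' k) (hq1' : HasSum q' 1)
    (π : ℕ × ℕ → ℝ) (lam : ℝ)
    (hπ : IsQSD (rickerKernel a b K K' q q') π lam) :
    lam ≤ 1 - rickerDelta ^ (1 / K + 1 / K') :=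
  hπ.le_one_sub_of_le_kernel_zero
    (rickerKernel_nonneg ha.le hb.le hK.le hK'.le hq (le_hasSum hq1 0 fun k _ => hq k) hq'
      (le_hasSum hq1' 0 fun k _ => hq' k))
    (rickerKernel_hasSum ha.le hb.le hK.le hK'.le hq hq1 hq' hq1')
    fun _ h1 h2 => rickerDelta_rpow_le_rickerKernel_zero ha.le hb.le hK hK' (hq 0) (hq' 0) h1 h2

/-- Any quasi-stationary eigenvalue λ of the stochastic Ricker competition chain
satisfies λ ≤ 1 − δ^{1/K + 1/K̃}. -/
theorem qsd_eigenvalue_le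
    (r r' a b K K' : ℝ) (ha : 0 < a) (hb : 0 < b) (hK : 0 < K) (hK' : 0 < K')
    (q q' : ℕ → ℝ)
    (hq : ∀ k, 0 ≤ q k) (hq1 : HasSum q 1)
    (hqmean : HasSum (fun k : ℕ => (k : ℝ) * q k) (Real.exp r))
    (hqvar : ∃ v : ℝ, HasSum (fun k : ℕ => (k : ℝ) ^ 2 * q k) v)
    (hq' : ∀ k, 0 ≤ q' k) (hq1' : HasSum q' 1)
    (hqmean' : HasSum (fun k : ℕ => (k : ℝ) * q' k) (Real.exp r'))
    (hqvar' : ∃ v : ℝ, HasSum (fun k : ℕ => (k : ℝ) ^ 2 * q' k) v)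
    (π : ℕ × ℕ → ℝ) (lam : ℝ) (hlam0 : 0 < lam) (hlam1 : lam < 1)
    (hπ : IsQSD (rickerKernel a b K K' q q') π lam) :
    lam ≤ 1 - rickerDelta ^ (1 / K + 1 / K') :=
  qsd_eigenvalue_le_general a b K K' ha hb hK hK' q q' hq hq1 hq' hq1' π lam hπ
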